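/- Let Q, X₁₁, X₂₁, X₃₁ be finite-valued random variables such that X₁₁, X₂₁, X₃₁ are mutually conditionally independent given Q. Let S₁ = h(X₂₁, X₃₁) where h is one-to-one in each argument, and let Y₁ = f(X₁₁, S₁) where f is one-to-one in each argument. Then min{ H(X₁₁|Q), H(Y₁|X₃₁,Q) − H(X₂₁|Q), H(Y₁|X₂₁,Q) − H(X₃₁|Q), H(Y₁|Q) − H(S₁|Q) } = H(Y₁|Q) − H(S₁|Q); that is, each of the first three quantities is greater than or equal to H(Y₁|Q) − H(S₁|Q). -/
import Mathlib


open scoped Classical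
open Finset

/-- A probability mass function on a finite sample space, given as a real-valued
weight function that is nonnegative and sums to one. -/
structure FinPMF (Ω : Type) where
  [fin : Fintype Ω]
  p : Ω → ℝ
  nonneg : ∀ ω, 0 ≤ p ω
  sum_one : ∑ ω, p ω = 1

/-- Probability of an event. -/
noncomputable def prE {Ω : Type} (μ : FinPMF Ω) (E : Ω → Prop) : ℝ :=
  letI := μ.fin
  ∑ ω, if E ω then μ.p ω else 0

/-- Probability that the random variable `X` takes the value `x`. -/
noncomputable def prX {Ω α : Type} (μ : FinPMF Ω) (X : Ω → α) (x : α) : ℝ :=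
  prE μ (fun ω => X ω = x)

/-- Shannon entropy (base 2) of a random variable on a finite probability space. -/
noncomputable def entH {Ω α : Type} (μ : FinPMF Ω) (X : Ω → α) : ℝ :=
  letI := μ.fin;
  -∑ x ∈ Finset.univ.image X, prX μ X x * Real.logb 2 (prX μ X x)

/-- Conditional entropy `H(X | Y)` (base 2). -/
noncomputable def condH {Ω α β : Type} (μ : FinPMF Ω) (X : Ω → α) (Y : Ω → β) : ℝ :=
  entH μ (fun ω => (X ω, Y ω)) - entH μ Y

/-- Conditional mutual information `I(X ; Y | Q)` (base 2). -/
noncomputable def condMI {Ω α β γ : Type} (μ : FinPMF Ω) (X : Ω → α) (Y : Ω → β)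
    (Q : Ω → γ) : ℝ :=
  condH μ X Q + condH μ Y Q - condH μ (fun ω => (X ω, Y ω)) Q

/-- A two-argument function is one-to-one in each argument. -/
def OneToOne {A B C : Type} (f : A → B → C) : Prop :=
  (∀ b, Function.Injective fun a => f a b) ∧ ∀ a, Function.Injective (f a)

/-- Conditional pmf `p_{X|U}(x|u)`. -/
noncomputable def condP {Ω α γ : Type} (μ : FinPMF Ω) (X : Ω → α) (U : Ω → γ)
    (x : α) (u : γ) : ℝ :=
  prE μ (fun ω => X ω = x ∧ U ω = u) / prX μ U u

/-- Independence of two random variables. -/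
def IndepFun {Ω α β : Type} (μ : FinPMF Ω) (X : Ω → α) (S : Ω → β) : Prop :=
  ∀ x s, prE μ (fun ω => X ω = x ∧ S ω = s) = prX μ X x * prX μ S s

/-- Conditional independence of `A` and `B` given `Z`:
for every `z` with `P(Z = z) > 0`, `P(A = a, B = b | Z = z) = P(A = a | Z = z) P(B = b | Z = z)`. -/
def CondIndepFun {Ω α β γ : Type} (μ : FinPMF Ω) (A : Ω → α) (B : Ω → β) (Z : Ω → γ) : Prop :=
  ∀ a b z, 0 < prX μ Z z →
    prE μ (fun ω => A ω = a ∧ B ω = b ∧ Z ω = z) / prX μ Z z =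
      (prE μ (fun ω => A ω = a ∧ Z ω = z) / prX μ Z z) *
        (prE μ (fun ω => B ω = b ∧ Z ω = z) / prX μ Z z)

/-- Mutual conditional independence of `X₁, X₂, X₃` given `Q`: the joint conditional pmf
factors into the product of the conditional marginals. -/
def CondIndepFun3 {Ω α₁ α₂ α₃ γ : Type} (μ : FinPMF Ω)
    (X₁ : Ω → α₁) (X₂ : Ω → α₂) (X₃ : Ω → α₃) (Q : Ω → γ) : Prop :=
  ∀ x₁ x₂ x₃ q, 0 < prX μ Q q →
    prE μ (fun ω => X₁ ω = x₁ ∧ X₂ ω = x₂ ∧ X₃ ω = x₃ ∧ Q ω = q) / prX μ Q q =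
      (prE μ (fun ω => X₁ ω = x₁ ∧ Q ω = q) / prX μ Q q) *
        (prE μ (fun ω => X₂ ω = x₂ ∧ Q ω = q) / prX μ Q q) *
        (prE μ (fun ω => X₃ ω = x₃ ∧ Q ω = q) / prX μ Q q)

/-- The ε-typical set (sequences whose empirical pmf is within a relative ε of `p`). -/
def Typical {𝒳 : Type} [Fintype 𝒳] (p : 𝒳 → ℝ) (ε : ℝ) (n : ℕ) (xs : Fin n → 𝒳) : Prop :=
  ∀ x : 𝒳, |((Finset.univ.filter fun i => xs i = x).card : ℝ) / n - p x| ≤ ε * p x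

/-- The number of codewords `⌈2^{nR}⌉` at rate `R` and blocklength `n`. -/
noncomputable def codeSize (R : ℝ) (n : ℕ) : ℕ := ⌈(2 : ℝ) ^ ((n : ℝ) * R)⌉₊

section Basics

variable {Ω : Type} (μ : FinPMF Ω)

lemma prE_nonneg (E : Ω → Prop) : 0 ≤ prE μ E := by
  unfold prE
  letI := μ.fin
  refine Finset.sum_nonneg fun ω _ => ?_
  split
  · exact μ.nonneg ω
  · exact le_refl 0

lemma prE_mono {E F : Ω → Prop} (h : ∀ ω, E ω → F ω) : prE μ E ≤ prE μ F := by
  unfold prE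
  letI := μ.fin
  refine Finset.sum_le_sum fun ω _ => ?_
  by_cases hE : E ω
  · simp [hE, h ω hE]
  · simp only [hE, if_false]
    split
    · exact μ.nonneg ω
    · exact le_refl 0

lemma prE_congr {E F : Ω → Prop} (h : ∀ ω, E ω ↔ F ω) : prE μ E = prE μ F := by
  unfold prE
  letI := μ.fin
  exact Finset.sum_congr rfl fun ω _ => by simp [h ω]

lemma prE_false {E : Ω → Prop} (h : ∀ ω, ¬ E ω) : prE μ E = 0 := by
  unfold prE
  letI := μ.fin
  exact Finset.sum_eq_zero fun ω _ => by simp [h ω]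

lemma prX_nonneg {α : Type} (X : Ω → α) (x : α) : 0 ≤ prX μ X x := prE_nonneg μ _

lemma prE_sum_fiber {β : Type} [Fintype β] (Y : Ω → β) (E : Ω → Prop) :
    ∑ y : β, prE μ (fun ω => Y ω = y ∧ E ω) = prE μ E := by
  unfold prE
  letI := μ.fin
  rw [Finset.sum_comm]
  refine Finset.sum_congr rfl fun ω _ => ?_
  by_cases hE : E ω
  · simp [hE]
  · simp [hE]

lemma sum_prX {α : Type} [Fintype α] (X : Ω → α) : ∑ x, prX μ X x = 1 := by
  have h : ∀ x, prX μ X x = prE μ (fun ω => X ω = x ∧ True) := fun x =>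
    prE_congr μ fun ω => by simp
  calc ∑ x, prX μ X x = ∑ x, prE μ (fun ω => X ω = x ∧ True) := by simp [h]
    _ = prE μ (fun _ => True) := prE_sum_fiber μ X _
    _ = 1 := by
        unfold prE
        letI := μ.fin
        simpa using μ.sum_one

lemma entH_univ {α : Type} [Fintype α] (X : Ω → α) :
    entH μ X = -∑ x : α, prX μ X x * Real.logb 2 (prX μ X x) := by
  unfold entH
  letI := μ.fin
  congr 1
  refine Finset.sum_subset (Finset.subset_univ _) fun x _ hx => ?_
  have : prX μ X x = 0 :=
    prE_false μ fun ω h => hx (Finset.mem_image.mpr ⟨ω, Finset.mem_univ ω, h⟩)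
  simp [this]

end Basics
section Ent

variable {Ω : Type} (μ : FinPMF Ω)

/-- entropy is invariant under injective post-composition -/
lemma entH_comp_inj {α β : Type} [Fintype α] [Fintype β] (X : Ω → α) {g : α → β}
    (hg : Function.Injective g) :
    entH μ (fun ω => g (X ω)) = entH μ X := by
  rw [entH_univ, entH_univ]
  congr 1
  have key : ∀ x, prX μ (fun ω => g (X ω)) (g x) = prX μ X x := fun x =>
    prE_congr μ fun ω => ⟨fun h => hg h, fun h => congrArg g h⟩
  have h1 : ∑ z : β, prX μ (fun ω => g (X ω)) z * Real.logb 2 (prX μ (fun ω => g (X ω)) z)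
      = ∑ z ∈ Finset.univ.image g,
          prX μ (fun ω => g (X ω)) z * Real.logb 2 (prX μ (fun ω => g (X ω)) z) := by
    refine (Finset.sum_subset (Finset.subset_univ _) fun z _ hz => ?_).symm
    have : prX μ (fun ω => g (X ω)) z = 0 :=
      prE_false μ fun ω h => hz (Finset.mem_image.mpr ⟨X ω, Finset.mem_univ _, h⟩)
    simp [this]
  rw [h1, Finset.sum_image (fun x _ y _ h => hg h)]
  exact Finset.sum_congr rfl fun x _ => by rw [key]

/-- marginal over the first coordinate -/
lemma sum_prX_pair_fst {α β : Type} [Fintype α] (X : Ω → α) (Y : Ω → β) (y : β) :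
    ∑ x : α, prX μ (fun ω => (X ω, Y ω)) (x, y) = prX μ Y y := by
  have h : ∀ x, prX μ (fun ω => (X ω, Y ω)) (x, y)
      = prE μ (fun ω => X ω = x ∧ Y ω = y) := fun x =>
    prE_congr μ fun ω => by simp [Prod.ext_iff]
  simp only [h]
  exact prE_sum_fiber μ X _

lemma entH_pair_ge_snd {α β : Type} [Fintype α] [Fintype β] (X : Ω → α) (Y : Ω → β) :
    entH μ Y ≤ entH μ (fun ω => (X ω, Y ω)) := by
  rw [entH_univ, entH_univ]
  rw [neg_le_neg_iff]
  calc ∑ p : α × β, prX μ (fun ω => (X ω, Y ω)) p * Real.logb 2 (prX μ (fun ω => (X ω, Y ω)) p)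
      ≤ ∑ p : α × β, prX μ (fun ω => (X ω, Y ω)) p * Real.logb 2 (prX μ Y p.2) := by
        refine Finset.sum_le_sum fun p _ => ?_
        rcases eq_or_lt_of_le (prX_nonneg μ (fun ω => (X ω, Y ω)) p) with h | h
        · simp [← h]
        · refine mul_le_mul_of_nonneg_left ?_ h.le
          refine Real.logb_le_logb_of_le one_lt_two h ?_
          exact prE_mono μ fun ω hω => by
            obtain ⟨p1, p2⟩ := p
            simpa [Prod.ext_iff] using (Prod.ext_iff.mp hω).2
    _ = ∑ y : β, prX μ Y y * Real.logb 2 (prX μ Y y) := by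
        rw [Fintype.sum_prod_type_right]
        refine Finset.sum_congr rfl fun y _ => ?_
        dsimp only
        rw [← Finset.sum_mul, sum_prX_pair_fst]

lemma entH_comp_le {α β : Type} [Fintype α] [Fintype β] (X : Ω → α) (g : α → β) :
    entH μ (fun ω => g (X ω)) ≤ entH μ X := by
  have h1 : entH μ (fun ω => (X ω, g (X ω))) = entH μ X :=
    entH_comp_inj μ X (g := fun x => (x, g x)) fun a b h => congrArg Prod.fst h
  calc entH μ (fun ω => g (X ω)) ≤ entH μ (fun ω => (X ω, g (X ω))) :=
        entH_pair_ge_snd μ X _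
    _ = entH μ X := h1

end Ent

section KL

variable {α β γ : Type} [Fintype α] [Fintype β] [Fintype γ]

private lemma tri_rw1 (p3 : α → β → γ → ℝ) (pXQ : α → γ → ℝ)
    (hX : ∀ x q, pXQ x q = ∑ y, p3 x y q) (f : α → γ → ℝ) :
    ∑ x, ∑ q, pXQ x q * f x q = ∑ x, ∑ y, ∑ q, p3 x y q * f x q := by
  refine Finset.sum_congr rfl fun x _ => ?_
  rw [Finset.sum_comm]
  refine Finset.sum_congr rfl fun q _ => ?_
  rw [hX, Finset.sum_mul]

private lemma tri_rw2 (p3 : α → β → γ → ℝ) (pYQ : β → γ → ℝ)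
    (hY : ∀ y q, pYQ y q = ∑ x, p3 x y q) (f : β → γ → ℝ) :
    ∑ y, ∑ q, pYQ y q * f y q = ∑ x, ∑ y, ∑ q, p3 x y q * f y q := by
  have h1 : ∀ y, ∑ q, pYQ y q * f y q = ∑ x, ∑ q, p3 x y q * f y q := by
    intro y
    calc ∑ q, pYQ y q * f y q = ∑ q, ∑ x, p3 x y q * f y q :=
          Finset.sum_congr rfl fun q _ => by rw [hY, Finset.sum_mul]
      _ = ∑ x, ∑ q, p3 x y q * f y q := Finset.sum_comm
  calc ∑ y, ∑ q, pYQ y q * f y q = ∑ y, ∑ x, ∑ q, p3 x y q * f y q :=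
        Finset.sum_congr rfl fun y _ => h1 y
    _ = ∑ x, ∑ y, ∑ q, p3 x y q * f y q := Finset.sum_comm

private lemma tri_rw3 (p3 : α → β → γ → ℝ) (pQ : γ → ℝ)
    (hQ : ∀ q, pQ q = ∑ x, ∑ y, p3 x y q) (f : γ → ℝ) :
    ∑ q, pQ q * f q = ∑ x, ∑ y, ∑ q, p3 x y q * f q := by
  have h1 : ∀ q, pQ q * f q = ∑ x, ∑ y, p3 x y q * f q := by
    intro q
    rw [hQ, Finset.sum_mul]
    exact Finset.sum_congr rfl fun x _ => by rw [Finset.sum_mul]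
  calc ∑ q, pQ q * f q = ∑ q, ∑ x, ∑ y, p3 x y q * f q :=
        Finset.sum_congr rfl fun q _ => h1 q
    _ = ∑ x, ∑ q, ∑ y, p3 x y q * f q := Finset.sum_comm
    _ = ∑ x, ∑ y, ∑ q, p3 x y q * f q :=
        Finset.sum_congr rfl fun x _ => Finset.sum_comm

lemma kl_core (p3 : α → β → γ → ℝ) (pXQ : α → γ → ℝ) (pYQ : β → γ → ℝ) (pQ : γ → ℝ)
    (h3n : ∀ x y q, 0 ≤ p3 x y q)
    (hX : ∀ x q, pXQ x q = ∑ y, p3 x y q)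
    (hY : ∀ y q, pYQ y q = ∑ x, p3 x y q)
    (hQ : ∀ q, pQ q = ∑ x, ∑ y, p3 x y q) :
    ∑ x, ∑ q, pXQ x q * Real.logb 2 (pXQ x q) + ∑ y, ∑ q, pYQ y q * Real.logb 2 (pYQ y q)
      ≤ ∑ x, ∑ y, ∑ q, p3 x y q * Real.logb 2 (p3 x y q) + ∑ q, pQ q * Real.logb 2 (pQ q) := by
  classical
  set L := Real.log 2 with hLdef
  have hLpos : 0 < L := Real.log_pos one_lt_two
  have hXn : ∀ x q, 0 ≤ pXQ x q := fun x q => by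
    rw [hX]; exact Finset.sum_nonneg fun y _ => h3n x y q
  have hYn : ∀ y q, 0 ≤ pYQ y q := fun y q => by
    rw [hY]; exact Finset.sum_nonneg fun x _ => h3n x y q
  have hQn : ∀ q, 0 ≤ pQ q := fun q => by
    rw [hQ]; exact Finset.sum_nonneg fun x _ => Finset.sum_nonneg fun y _ => h3n x y q
  set m : α → β → γ → ℝ :=
    fun x y q => if pQ q = 0 then 0 else pXQ x q * pYQ y q / pQ q with hmdef
  -- marginal sums of pXQ/pYQ over the first variable give pQ
  have hXQ : ∀ q, ∑ x, pXQ x q = pQ q := fun q => by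
    rw [hQ]; exact Finset.sum_congr rfl fun x _ => hX x q
  have hYQ : ∀ q, ∑ y, pYQ y q = pQ q := fun q => by
    rw [hQ, Finset.sum_comm]; exact Finset.sum_congr rfl fun y _ => hY y q
  -- key per-term bound
  have key : ∀ x y q, (p3 x y q - m x y q) / L ≤
      p3 x y q * Real.logb 2 (p3 x y q) + p3 x y q * Real.logb 2 (pQ q)
        - p3 x y q * Real.logb 2 (pXQ x q) - p3 x y q * Real.logb 2 (pYQ y q) := by
    intro x y q
    have hmn : 0 ≤ m x y q := by
      rw [hmdef]
      dsimp only
      split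
      · exact le_refl 0
      · exact div_nonneg (mul_nonneg (hXn x q) (hYn y q)) (hQn q)
    by_cases h0 : p3 x y q = 0
    · have hle : (p3 x y q - m x y q) / L ≤ 0 := by
        apply div_nonpos_of_nonpos_of_nonneg
        · rw [h0]; linarith
        · exact hLpos.le
      have hrhs : p3 x y q * Real.logb 2 (p3 x y q) + p3 x y q * Real.logb 2 (pQ q)
          - p3 x y q * Real.logb 2 (pXQ x q) - p3 x y q * Real.logb 2 (pYQ y q) = 0 := by
        rw [h0]; ring
      linarith
    · have hp : 0 < p3 x y q := lt_of_le_of_ne (h3n x y q) (Ne.symm h0)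
      have hpX : 0 < pXQ x q := lt_of_lt_of_le hp (by
        rw [hX]; exact Finset.single_le_sum (fun y _ => h3n x y q) (Finset.mem_univ y))
      have hpY : 0 < pYQ y q := lt_of_lt_of_le hp (by
        rw [hY]; exact Finset.single_le_sum (fun x _ => h3n x y q) (Finset.mem_univ x))
      have hpQ : 0 < pQ q := lt_of_lt_of_le hpX (by
        rw [← hXQ q]; exact Finset.single_le_sum (fun x _ => hXn x q) (Finset.mem_univ x))
      have hm : m x y q = pXQ x q * pYQ y q / pQ q := by
        rw [hmdef]; exact if_neg (ne_of_gt hpQ)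
      set r : ℝ := pXQ x q * pYQ y q / (p3 x y q * pQ q) with hrdef
      have hr : 0 < r := by positivity
      have hlog : Real.log r ≤ r - 1 := Real.log_le_sub_one_of_pos hr
      have hsplit : Real.log r = Real.log (pXQ x q) + Real.log (pYQ y q)
          - Real.log (p3 x y q) - Real.log (pQ q) := by
        rw [hrdef, Real.log_div (by positivity) (by positivity),
          Real.log_mul (ne_of_gt hpX) (ne_of_gt hpY),
          Real.log_mul (ne_of_gt hp) (ne_of_gt hpQ)]
        ring
      have hpr : p3 x y q * r = m x y q := by
        rw [hm, hrdef]
        field_simp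
      have h1 : p3 x y q * Real.log r ≤ p3 x y q * (r - 1) :=
        mul_le_mul_of_nonneg_left hlog hp.le
      have h2 : p3 x y q * (r - 1) = m x y q - p3 x y q := by rw [← hpr]; ring
      have h3 : p3 x y q * Real.log r = p3 x y q * Real.log (pXQ x q)
          + p3 x y q * Real.log (pYQ y q) - p3 x y q * Real.log (p3 x y q)
          - p3 x y q * Real.log (pQ q) := by rw [hsplit]; ring
      have h4 : p3 x y q - m x y q ≤ p3 x y q * Real.log (p3 x y q)
          + p3 x y q * Real.log (pQ q) - p3 x y q * Real.log (pXQ x q)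
          - p3 x y q * Real.log (pYQ y q) := by linarith
      have h5 : p3 x y q * Real.logb 2 (p3 x y q) + p3 x y q * Real.logb 2 (pQ q)
          - p3 x y q * Real.logb 2 (pXQ x q) - p3 x y q * Real.logb 2 (pYQ y q)
          = (p3 x y q * Real.log (p3 x y q) + p3 x y q * Real.log (pQ q)
            - p3 x y q * Real.log (pXQ x q) - p3 x y q * Real.log (pYQ y q)) / L := by
        simp only [Real.logb, hLdef]
        ring
      rw [h5]
      exact div_le_div_of_nonneg_right h4 hLpos.le
  -- sum of m over x, y equals pQ q
  have hmsum : ∀ q, ∑ x, ∑ y, m x y q = pQ q := by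
    intro q
    by_cases h0 : pQ q = 0
    · simp [hmdef, h0]
    · have : ∑ x, ∑ y, m x y q = (∑ x, pXQ x q) * (∑ y, pYQ y q) / pQ q := by
        rw [Finset.sum_mul, Finset.sum_div]
        refine Finset.sum_congr rfl fun x _ => ?_
        rw [hmdef]
        simp only [h0, if_false]
        rw [Finset.mul_sum, Finset.sum_div]
      rw [this, hXQ, hYQ]
      field_simp
  -- sum the key bound
  have hz : ∀ q, ∑ x, ∑ y, (p3 x y q - m x y q) = 0 := by
    intro q
    simp only [Finset.sum_sub_distrib]
    rw [← hQ q, hmsum q]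
    exact sub_self _
  have hsum3 : ∑ x, ∑ y, ∑ q, ((p3 x y q - m x y q) / L) = 0 := by
    simp only [← Finset.sum_div]
    have hcomm : ∑ x, ∑ y, ∑ q, (p3 x y q - m x y q)
        = ∑ q, ∑ x, ∑ y, (p3 x y q - m x y q) := by
      calc ∑ x, ∑ y, ∑ q, (p3 x y q - m x y q)
          = ∑ x, ∑ q, ∑ y, (p3 x y q - m x y q) :=
            Finset.sum_congr rfl fun x _ => Finset.sum_comm
        _ = ∑ q, ∑ x, ∑ y, (p3 x y q - m x y q) := Finset.sum_comm
    rw [hcomm, Finset.sum_eq_zero fun q _ => hz q, zero_div]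
  have main : 0 ≤ ∑ x, ∑ y, ∑ q,
      (p3 x y q * Real.logb 2 (p3 x y q) + p3 x y q * Real.logb 2 (pQ q)
        - p3 x y q * Real.logb 2 (pXQ x q) - p3 x y q * Real.logb 2 (pYQ y q)) := by
    rw [← hsum3]
    refine Finset.sum_le_sum fun x _ => Finset.sum_le_sum fun y _ =>
      Finset.sum_le_sum fun q _ => key x y q
  -- expand the big sum
  have expand : ∑ x, ∑ y, ∑ q,
      (p3 x y q * Real.logb 2 (p3 x y q) + p3 x y q * Real.logb 2 (pQ q)
        - p3 x y q * Real.logb 2 (pXQ x q) - p3 x y q * Real.logb 2 (pYQ y q))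
      = ∑ x, ∑ y, ∑ q, p3 x y q * Real.logb 2 (p3 x y q)
        + ∑ q, pQ q * Real.logb 2 (pQ q)
        - ∑ x, ∑ q, pXQ x q * Real.logb 2 (pXQ x q)
        - ∑ y, ∑ q, pYQ y q * Real.logb 2 (pYQ y q) := by
    simp only [Finset.sum_sub_distrib, Finset.sum_add_distrib]
    rw [tri_rw1 p3 pXQ hX (fun x q => Real.logb 2 (pXQ x q)),
      tri_rw2 p3 pYQ hY (fun y q => Real.logb 2 (pYQ y q)),
      tri_rw3 p3 pQ hQ (fun q => Real.logb 2 (pQ q))]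
  rw [expand] at main
  linarith

lemma kl_eq_core (p3 : α → β → γ → ℝ) (pXQ : α → γ → ℝ) (pYQ : β → γ → ℝ) (pQ : γ → ℝ)
    (h3n : ∀ x y q, 0 ≤ p3 x y q)
    (hX : ∀ x q, pXQ x q = ∑ y, p3 x y q)
    (hY : ∀ y q, pYQ y q = ∑ x, p3 x y q)
    (hQ : ∀ q, pQ q = ∑ x, ∑ y, p3 x y q)
    (hfac : ∀ x y q, p3 x y q * pQ q = pXQ x q * pYQ y q) :
    ∑ x, ∑ q, pXQ x q * Real.logb 2 (pXQ x q) + ∑ y, ∑ q, pYQ y q * Real.logb 2 (pYQ y q)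
      = ∑ x, ∑ y, ∑ q, p3 x y q * Real.logb 2 (p3 x y q) + ∑ q, pQ q * Real.logb 2 (pQ q) := by
  classical
  have per : ∀ x y q, p3 x y q * Real.logb 2 (p3 x y q)
      = p3 x y q * Real.logb 2 (pXQ x q) + p3 x y q * Real.logb 2 (pYQ y q)
        - p3 x y q * Real.logb 2 (pQ q) := by
    intro x y q
    by_cases h0 : p3 x y q = 0
    · simp [h0]
    · have hp : 0 < p3 x y q := lt_of_le_of_ne (h3n x y q) (Ne.symm h0)
      have hpX : 0 < pXQ x q := lt_of_lt_of_le hp (by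
        rw [hX]; exact Finset.single_le_sum (fun y _ => h3n x y q) (Finset.mem_univ y))
      have hpY : 0 < pYQ y q := lt_of_lt_of_le hp (by
        rw [hY]; exact Finset.single_le_sum (fun x _ => h3n x y q) (Finset.mem_univ x))
      have hpQ : 0 < pQ q := by
        have h1 : pXQ x q ≤ pQ q := by
          rw [hQ]
          calc pXQ x q = ∑ y, p3 x y q := hX x q
            _ ≤ ∑ x, ∑ y, p3 x y q := Finset.single_le_sum
                (fun x _ => Finset.sum_nonneg fun y _ => h3n x y q) (Finset.mem_univ x)
        linarith
      have hval : p3 x y q = pXQ x q * pYQ y q / pQ q := by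
        rw [eq_div_iff (ne_of_gt hpQ)]
        exact hfac x y q
      rw [hval, Real.logb_div (by positivity) (ne_of_gt hpQ),
        Real.logb_mul (ne_of_gt hpX) (ne_of_gt hpY)]
      ring
  have expand : ∑ x, ∑ y, ∑ q, p3 x y q * Real.logb 2 (p3 x y q)
      = ∑ x, ∑ q, pXQ x q * Real.logb 2 (pXQ x q)
        + ∑ y, ∑ q, pYQ y q * Real.logb 2 (pYQ y q)
        - ∑ q, pQ q * Real.logb 2 (pQ q) := by
    calc ∑ x, ∑ y, ∑ q, p3 x y q * Real.logb 2 (p3 x y q)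
        = ∑ x, ∑ y, ∑ q, (p3 x y q * Real.logb 2 (pXQ x q)
            + p3 x y q * Real.logb 2 (pYQ y q) - p3 x y q * Real.logb 2 (pQ q)) :=
          Finset.sum_congr rfl fun x _ => Finset.sum_congr rfl fun y _ =>
            Finset.sum_congr rfl fun q _ => per x y q
      _ = _ := by
          simp only [Finset.sum_sub_distrib, Finset.sum_add_distrib]
          rw [tri_rw1 p3 pXQ hX (fun x q => Real.logb 2 (pXQ x q)),
            tri_rw2 p3 pYQ hY (fun y q => Real.logb 2 (pYQ y q)),
            tri_rw3 p3 pQ hQ (fun q => Real.logb 2 (pQ q))]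
  rw [expand]
  ring

end KL

section Bridge

variable {Ω : Type} (μ : FinPMF Ω) {α β γ : Type} [Fintype α] [Fintype β] [Fintype γ]

lemma prX_pair_eq_prE (X : Ω → α) (Q : Ω → γ) (x : α) (q : γ) :
    prX μ (fun ω => (X ω, Q ω)) (x, q) = prE μ (fun ω => X ω = x ∧ Q ω = q) :=
  prE_congr μ fun ω => by simp [Prod.ext_iff]

lemma prX_tri_eq_prE (X : Ω → α) (Y : Ω → β) (Q : Ω → γ) (x : α) (y : β) (q : γ) :
    prX μ (fun ω => ((X ω, Y ω), Q ω)) ((x, y), q)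
      = prE μ (fun ω => X ω = x ∧ Y ω = y ∧ Q ω = q) :=
  prE_congr μ fun ω => by simp [Prod.ext_iff, and_assoc]

lemma entH_pair_sum (X : Ω → α) (Q : Ω → γ) :
    entH μ (fun ω => (X ω, Q ω)) = -∑ x : α, ∑ q : γ,
      prE μ (fun ω => X ω = x ∧ Q ω = q)
        * Real.logb 2 (prE μ (fun ω => X ω = x ∧ Q ω = q)) := by
  rw [entH_univ, Fintype.sum_prod_type]
  congr 1
  refine Finset.sum_congr rfl fun x _ => Finset.sum_congr rfl fun q _ => ?_
  rw [prX_pair_eq_prE]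

lemma entH_tri_sum (X : Ω → α) (Y : Ω → β) (Q : Ω → γ) :
    entH μ (fun ω => ((X ω, Y ω), Q ω)) = -∑ x : α, ∑ y : β, ∑ q : γ,
      prE μ (fun ω => X ω = x ∧ Y ω = y ∧ Q ω = q)
        * Real.logb 2 (prE μ (fun ω => X ω = x ∧ Y ω = y ∧ Q ω = q)) := by
  rw [entH_univ, Fintype.sum_prod_type, Fintype.sum_prod_type]
  congr 1
  refine Finset.sum_congr rfl fun x _ => Finset.sum_congr rfl fun y _ =>
    Finset.sum_congr rfl fun q _ => ?_
  rw [prX_tri_eq_prE]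

lemma marg_hX (X : Ω → α) (Y : Ω → β) (Q : Ω → γ) (x : α) (q : γ) :
    prE μ (fun ω => X ω = x ∧ Q ω = q)
      = ∑ y : β, prE μ (fun ω => X ω = x ∧ Y ω = y ∧ Q ω = q) := by
  rw [← prE_sum_fiber μ Y (fun ω => X ω = x ∧ Q ω = q)]
  exact Finset.sum_congr rfl fun y _ => prE_congr μ fun ω => by tauto

lemma marg_hY (X : Ω → α) (Y : Ω → β) (Q : Ω → γ) (y : β) (q : γ) :
    prE μ (fun ω => Y ω = y ∧ Q ω = q)
      = ∑ x : α, prE μ (fun ω => X ω = x ∧ Y ω = y ∧ Q ω = q) := by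
  rw [← prE_sum_fiber μ X (fun ω => Y ω = y ∧ Q ω = q)]

lemma marg_hQ (X : Ω → α) (Y : Ω → β) (Q : Ω → γ) (q : γ) :
    prX μ Q q = ∑ x : α, ∑ y : β, prE μ (fun ω => X ω = x ∧ Y ω = y ∧ Q ω = q) := by
  have h1 : prX μ Q q = ∑ x : α, prE μ (fun ω => X ω = x ∧ Q ω = q) := by
    show prE μ (fun ω => Q ω = q) = _
    rw [← prE_sum_fiber μ X (fun ω => Q ω = q)]
  rw [h1]
  exact Finset.sum_congr rfl fun x _ => marg_hX μ X Y Q x q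

/-- conditional subadditivity: `I(X;Y|Q) ≥ 0` in entropy form -/
lemma entH_cond_subadd (X : Ω → α) (Y : Ω → β) (Q : Ω → γ) :
    entH μ (fun ω => ((X ω, Y ω), Q ω)) + entH μ Q
      ≤ entH μ (fun ω => (X ω, Q ω)) + entH μ (fun ω => (Y ω, Q ω)) := by
  have hk := kl_core
    (fun x y q => prE μ (fun ω => X ω = x ∧ Y ω = y ∧ Q ω = q))
    (fun x q => prE μ (fun ω => X ω = x ∧ Q ω = q))
    (fun y q => prE μ (fun ω => Y ω = y ∧ Q ω = q))
    (fun q => prX μ Q q)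
    (fun x y q => prE_nonneg μ _)
    (fun x q => marg_hX μ X Y Q x q)
    (fun y q => marg_hY μ X Y Q y q)
    (fun q => marg_hQ μ X Y Q q)
  rw [entH_pair_sum μ X Q, entH_pair_sum μ Y Q, entH_tri_sum μ X Y Q, entH_univ μ Q]
  linarith

/-- conditional independence gives additivity: `I(X;Y|Q) = 0` in entropy form -/
lemma entH_cond_add (X : Ω → α) (Y : Ω → β) (Q : Ω → γ)
    (hfac : ∀ x y q, prE μ (fun ω => X ω = x ∧ Y ω = y ∧ Q ω = q) * prX μ Q q
      = prE μ (fun ω => X ω = x ∧ Q ω = q) * prE μ (fun ω => Y ω = y ∧ Q ω = q)) :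
    entH μ (fun ω => ((X ω, Y ω), Q ω)) + entH μ Q
      = entH μ (fun ω => (X ω, Q ω)) + entH μ (fun ω => (Y ω, Q ω)) := by
  have hk := kl_eq_core
    (fun x y q => prE μ (fun ω => X ω = x ∧ Y ω = y ∧ Q ω = q))
    (fun x q => prE μ (fun ω => X ω = x ∧ Q ω = q))
    (fun y q => prE μ (fun ω => Y ω = y ∧ Q ω = q))
    (fun q => prX μ Q q)
    (fun x y q => prE_nonneg μ _)
    (fun x q => marg_hX μ X Y Q x q)
    (fun y q => marg_hY μ X Y Q y q)
    (fun q => marg_hQ μ X Y Q q)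
    hfac
  rw [entH_pair_sum μ X Q, entH_pair_sum μ Y Q, entH_tri_sum μ X Y Q, entH_univ μ Q]
  linarith

end Bridge

section Facts

variable {Ω 𝒬 𝒜 ℬ 𝒞 : Type} [Fintype 𝒬] [Fintype 𝒜] [Fintype ℬ] [Fintype 𝒞]
variable (μ : FinPMF Ω) (Q : Ω → 𝒬) (A : Ω → 𝒜) (B : Ω → ℬ) (C : Ω → 𝒞)

lemma condIndep3_swap (hindep : CondIndepFun3 μ A B C Q) : CondIndepFun3 μ A C B Q := by
  intro a c b q hq
  have h2 := hindep a b c q hq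
  have e : prE μ (fun ω => A ω = a ∧ C ω = c ∧ B ω = b ∧ Q ω = q)
      = prE μ (fun ω => A ω = a ∧ B ω = b ∧ C ω = c ∧ Q ω = q) :=
    prE_congr μ fun ω => by tauto
  rw [e, h2]
  ring

lemma fact_BC (hindep : CondIndepFun3 μ A B C Q) :
    ∀ b c q, prE μ (fun ω => B ω = b ∧ C ω = c ∧ Q ω = q) * prX μ Q q
      = prE μ (fun ω => B ω = b ∧ Q ω = q) * prE μ (fun ω => C ω = c ∧ Q ω = q) := by
  intro b c q
  rcases eq_or_lt_of_le (prX_nonneg μ Q q) with hq | hq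
  · have hb : prE μ (fun ω => B ω = b ∧ Q ω = q) = 0 := by
      have h1 : prE μ (fun ω => B ω = b ∧ Q ω = q) ≤ prX μ Q q :=
        prE_mono μ fun ω hω => hω.2
      have h2 := prE_nonneg μ (fun ω => B ω = b ∧ Q ω = q)
      linarith
    rw [hb, ← hq]
    ring
  · have hq' : prX μ Q q ≠ 0 := ne_of_gt hq
    have key : ∀ a, prE μ (fun ω => A ω = a ∧ B ω = b ∧ C ω = c ∧ Q ω = q)
        = prE μ (fun ω => A ω = a ∧ Q ω = q) *
            (prE μ (fun ω => B ω = b ∧ Q ω = q) * prE μ (fun ω => C ω = c ∧ Q ω = q)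
              / (prX μ Q q * prX μ Q q)) := by
      intro a
      have h2 := hindep a b c q hq
      rw [div_eq_iff hq'] at h2
      rw [h2]
      field_simp
    have hsum : prE μ (fun ω => B ω = b ∧ C ω = c ∧ Q ω = q)
        = ∑ a, prE μ (fun ω => A ω = a ∧ B ω = b ∧ C ω = c ∧ Q ω = q) :=
      (prE_sum_fiber μ A _).symm
    have hA : ∑ a : 𝒜, prE μ (fun ω => A ω = a ∧ Q ω = q) = prX μ Q q :=
      prE_sum_fiber μ A _
    have hS : ∑ a, prE μ (fun ω => A ω = a ∧ B ω = b ∧ C ω = c ∧ Q ω = q)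
        = (∑ a, prE μ (fun ω => A ω = a ∧ Q ω = q)) *
            (prE μ (fun ω => B ω = b ∧ Q ω = q) * prE μ (fun ω => C ω = c ∧ Q ω = q)
              / (prX μ Q q * prX μ Q q)) := by
      rw [Finset.sum_mul]
      exact Finset.sum_congr rfl fun a _ => key a
    rw [hsum, hS, hA]
    field_simp

lemma fact_A_BC (hindep : CondIndepFun3 μ A B C Q) :
    ∀ a b c q, prE μ (fun ω => A ω = a ∧ B ω = b ∧ C ω = c ∧ Q ω = q) * prX μ Q q
      = prE μ (fun ω => A ω = a ∧ Q ω = q)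
        * prE μ (fun ω => B ω = b ∧ C ω = c ∧ Q ω = q) := by
  intro a b c q
  rcases eq_or_lt_of_le (prX_nonneg μ Q q) with hq | hq
  · have ha : prE μ (fun ω => A ω = a ∧ Q ω = q) = 0 := by
      have h1 : prE μ (fun ω => A ω = a ∧ Q ω = q) ≤ prX μ Q q :=
        prE_mono μ fun ω hω => hω.2
      have h2 := prE_nonneg μ (fun ω => A ω = a ∧ Q ω = q)
      linarith
    rw [ha, ← hq]
    ring
  · have hq' : prX μ Q q ≠ 0 := ne_of_gt hq
    have h2 := hindep a b c q hq
    rw [div_eq_iff hq'] at h2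
    have h3 := fact_BC μ Q A B C hindep b c q
    have hbc : prE μ (fun ω => B ω = b ∧ C ω = c ∧ Q ω = q)
        = prE μ (fun ω => B ω = b ∧ Q ω = q) * prE μ (fun ω => C ω = c ∧ Q ω = q)
          / prX μ Q q := by
      rw [eq_div_iff hq']
      exact h3
    rw [h2, hbc]
    field_simp

end Facts

section Main

variable {Ω 𝒬 𝒜 ℬ 𝒞 𝒮 𝒴 : Type} [Fintype 𝒬] [Fintype 𝒜] [Fintype ℬ] [Fintype 𝒞]
  [Fintype 𝒮] [Fintype 𝒴]

lemma aux1 (μ : FinPMF Ω) (Q : Ω → 𝒬) (A : Ω → 𝒜) (B : Ω → ℬ) (C : Ω → 𝒞)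
    (h : ℬ → 𝒞 → 𝒮) (f : 𝒜 → 𝒮 → 𝒴) :
    condH μ (fun ω => f (A ω) (h (B ω) (C ω))) Q - condH μ (fun ω => h (B ω) (C ω)) Q
      ≤ condH μ A Q := by
  have hsub : entH μ (fun ω => ((A ω, h (B ω) (C ω)), Q ω)) + entH μ Q
      ≤ entH μ (fun ω => (A ω, Q ω)) + entH μ (fun ω => (h (B ω) (C ω), Q ω)) :=
    entH_cond_subadd μ A (fun ω => h (B ω) (C ω)) Q
  have hY : entH μ (fun ω => (f (A ω) (h (B ω) (C ω)), Q ω))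
      ≤ entH μ (fun ω => ((A ω, h (B ω) (C ω)), Q ω)) :=
    entH_comp_le μ (fun ω => ((A ω, h (B ω) (C ω)), Q ω))
      (fun p => (f p.1.1 p.1.2, p.2))
  simp only [condH]
  linarith

lemma aux2 (μ : FinPMF Ω) (Q : Ω → 𝒬) (A : Ω → 𝒜) (B : Ω → ℬ) (C : Ω → 𝒞)
    (h : ℬ → 𝒞 → 𝒮) (f : 𝒜 → 𝒮 → 𝒴)
    (hindep : CondIndepFun3 μ A B C Q) (hh : OneToOne h) (hf : OneToOne f) :
    condH μ (fun ω => f (A ω) (h (B ω) (C ω))) Q - condH μ (fun ω => h (B ω) (C ω)) Q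
      ≤ condH μ (fun ω => f (A ω) (h (B ω) (C ω))) (fun ω => (C ω, Q ω)) - condH μ B Q := by
  -- I(B;C|Q) = 0
  have f1 : entH μ (fun ω => ((B ω, C ω), Q ω)) + entH μ Q
      = entH μ (fun ω => (B ω, Q ω)) + entH μ (fun ω => (C ω, Q ω)) :=
    entH_cond_add μ B C Q (fun b c q => fact_BC μ Q A B C hindep b c q)
  -- I(A;(B,C)|Q) = 0
  have hfac2 : ∀ (a : 𝒜) (y : ℬ × 𝒞) (q : 𝒬),
      prE μ (fun ω => A ω = a ∧ (B ω, C ω) = y ∧ Q ω = q) * prX μ Q q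
        = prE μ (fun ω => A ω = a ∧ Q ω = q)
          * prE μ (fun ω => (B ω, C ω) = y ∧ Q ω = q) := by
    intro a y q
    obtain ⟨b, c⟩ := y
    have e1 : prE μ (fun ω => A ω = a ∧ (B ω, C ω) = (b, c) ∧ Q ω = q)
        = prE μ (fun ω => A ω = a ∧ B ω = b ∧ C ω = c ∧ Q ω = q) :=
      prE_congr μ fun ω => by simp [Prod.ext_iff, and_assoc]
    have e2 : prE μ (fun ω => (B ω, C ω) = (b, c) ∧ Q ω = q)
        = prE μ (fun ω => B ω = b ∧ C ω = c ∧ Q ω = q) :=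
      prE_congr μ fun ω => by simp [Prod.ext_iff, and_assoc]
    rw [e1, e2]
    exact fact_A_BC μ Q A B C hindep a b c q
  have c2 : entH μ (fun ω => ((A ω, (B ω, C ω)), Q ω)) + entH μ Q
      = entH μ (fun ω => (A ω, Q ω)) + entH μ (fun ω => ((B ω, C ω), Q ω)) :=
    entH_cond_add μ A (fun ω => (B ω, C ω)) Q hfac2
  -- H(A,(S,C),Q) = H(A,(B,C),Q)
  have hg1 : Function.Injective
      (fun p : (𝒜 × (ℬ × 𝒞)) × 𝒬 => ((p.1.1, (h p.1.2.1 p.1.2.2, p.1.2.2)), p.2)) := by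
    rintro ⟨⟨a, b, c⟩, q⟩ ⟨⟨a', b', c'⟩, q'⟩ e
    simp only [Prod.mk.injEq] at e
    obtain ⟨⟨e0, e1, e2⟩, e3⟩ := e
    subst e0; subst e2; subst e3
    simp [hh.1 c e1]
  have c1 : entH μ (fun ω => ((A ω, (h (B ω) (C ω), C ω)), Q ω))
      = entH μ (fun ω => ((A ω, (B ω, C ω)), Q ω)) :=
    entH_comp_inj μ (fun ω => ((A ω, (B ω, C ω)), Q ω)) hg1
  -- I(A;S|Q) ≥ 0
  have f3 : entH μ (fun ω => ((A ω, h (B ω) (C ω)), Q ω)) + entH μ Q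
      ≤ entH μ (fun ω => (A ω, Q ω)) + entH μ (fun ω => (h (B ω) (C ω), Q ω)) :=
    entH_cond_subadd μ A (fun ω => h (B ω) (C ω)) Q
  -- I(S;C|(Y,Q)) ≥ 0, reassociated
  have f5' : entH μ (fun ω => ((h (B ω) (C ω), C ω), (f (A ω) (h (B ω) (C ω)), Q ω)))
        + entH μ (fun ω => (f (A ω) (h (B ω) (C ω)), Q ω))
      ≤ entH μ (fun ω => (h (B ω) (C ω), (f (A ω) (h (B ω) (C ω)), Q ω)))
        + entH μ (fun ω => (C ω, (f (A ω) (h (B ω) (C ω)), Q ω))) :=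
    entH_cond_subadd μ (fun ω => h (B ω) (C ω)) C
      (fun ω => (f (A ω) (h (B ω) (C ω)), Q ω))
  have hginj : Function.Injective
      (fun p : (𝒮 × 𝒞) × (𝒴 × 𝒬) => ((p.2.1, p.1), p.2.2)) := by
    rintro ⟨⟨s, c⟩, y, q⟩ ⟨⟨s', c'⟩, y', q'⟩ e
    simp only [Prod.mk.injEq] at e
    obtain ⟨⟨e1, e2, e3⟩, e4⟩ := e
    simp [e1, e2, e3, e4]
  have s1 : entH μ (fun ω => ((h (B ω) (C ω), C ω), (f (A ω) (h (B ω) (C ω)), Q ω)))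
      = entH μ (fun ω => ((f (A ω) (h (B ω) (C ω)), (h (B ω) (C ω), C ω)), Q ω)) :=
    (entH_comp_inj μ
      (fun ω => ((h (B ω) (C ω), C ω), (f (A ω) (h (B ω) (C ω)), Q ω))) hginj).symm
  have hginj2 : Function.Injective
      (fun p : 𝒮 × (𝒴 × 𝒬) => ((p.2.1, p.1), p.2.2)) := by
    rintro ⟨s, y, q⟩ ⟨s', y', q'⟩ e
    simp only [Prod.mk.injEq] at e
    obtain ⟨⟨e1, e2⟩, e3⟩ := e
    simp [e1, e2, e3]
  have s2 : entH μ (fun ω => (h (B ω) (C ω), (f (A ω) (h (B ω) (C ω)), Q ω)))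
      = entH μ (fun ω => ((f (A ω) (h (B ω) (C ω)), h (B ω) (C ω)), Q ω)) :=
    (entH_comp_inj μ
      (fun ω => (h (B ω) (C ω), (f (A ω) (h (B ω) (C ω)), Q ω))) hginj2).symm
  have hginj3 : Function.Injective
      (fun p : 𝒞 × (𝒴 × 𝒬) => ((p.2.1, p.1), p.2.2)) := by
    rintro ⟨c, y, q⟩ ⟨c', y', q'⟩ e
    simp only [Prod.mk.injEq] at e
    obtain ⟨⟨e1, e2⟩, e3⟩ := e
    simp [e1, e2, e3]
  have s3 : entH μ (fun ω => (C ω, (f (A ω) (h (B ω) (C ω)), Q ω)))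
      = entH μ (fun ω => ((f (A ω) (h (B ω) (C ω)), C ω), Q ω)) :=
    (entH_comp_inj μ
      (fun ω => (C ω, (f (A ω) (h (B ω) (C ω)), Q ω))) hginj3).symm
  -- H((A,S),Q) = H((Y,S),Q)
  have hgf1 : Function.Injective
      (fun p : (𝒜 × 𝒮) × 𝒬 => ((f p.1.1 p.1.2, p.1.2), p.2)) := by
    rintro ⟨⟨a, s⟩, q⟩ ⟨⟨a', s'⟩, q'⟩ e
    simp only [Prod.mk.injEq] at e
    obtain ⟨⟨e1, e2⟩, e3⟩ := e
    subst e2; subst e3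
    simp [hf.1 s e1]
  have f6 : entH μ (fun ω => ((f (A ω) (h (B ω) (C ω)), h (B ω) (C ω)), Q ω))
      = entH μ (fun ω => ((A ω, h (B ω) (C ω)), Q ω)) :=
    entH_comp_inj μ (fun ω => ((A ω, h (B ω) (C ω)), Q ω)) hgf1
  -- H((A,(S,C)),Q) = H((Y,(S,C)),Q)
  have hgf2 : Function.Injective
      (fun p : (𝒜 × (𝒮 × 𝒞)) × 𝒬 => ((f p.1.1 p.1.2.1, p.1.2), p.2)) := by
    rintro ⟨⟨a, s, c⟩, q⟩ ⟨⟨a', s', c'⟩, q'⟩ e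
    simp only [Prod.mk.injEq] at e
    obtain ⟨⟨e1, e2, e3⟩, e4⟩ := e
    subst e2; subst e3; subst e4
    simp [hf.1 s e1]
  have f7 : entH μ (fun ω => ((f (A ω) (h (B ω) (C ω)), (h (B ω) (C ω), C ω)), Q ω))
      = entH μ (fun ω => ((A ω, (h (B ω) (C ω), C ω)), Q ω)) :=
    entH_comp_inj μ (fun ω => ((A ω, (h (B ω) (C ω), C ω)), Q ω)) hgf2
  -- H(Y,(C,Q)) = H((Y,C),Q)
  have hgr : Function.Injective
      (fun p : 𝒴 × (𝒞 × 𝒬) => ((p.1, p.2.1), p.2.2)) := by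
    rintro ⟨y, c, q⟩ ⟨y', c', q'⟩ e
    simp only [Prod.mk.injEq] at e
    obtain ⟨⟨e1, e2⟩, e3⟩ := e
    simp [e1, e2, e3]
  have rYC : entH μ (fun ω => ((f (A ω) (h (B ω) (C ω)), C ω), Q ω))
      = entH μ (fun ω => (f (A ω) (h (B ω) (C ω)), (C ω, Q ω))) :=
    entH_comp_inj μ (fun ω => (f (A ω) (h (B ω) (C ω)), (C ω, Q ω))) hgr
  simp only [condH]
  linarith

end Main

/-- The minimum of the four interference-decoding bounds is always
attained by `H(Y₁|Q) − H(S₁|Q)`, where `S₁ = h(X₂₁, X₃₁)` and `Y₁ = f(X₁₁, S₁)`. -/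
theorem min_of_four_is_last
    {Ω 𝒬 𝒜 ℬ 𝒞 𝒮 𝒴 : Type} [Fintype 𝒬] [Nonempty 𝒬] [Fintype 𝒜] [Nonempty 𝒜]
    [Fintype ℬ] [Nonempty ℬ] [Fintype 𝒞] [Nonempty 𝒞] [Fintype 𝒮] [Nonempty 𝒮]
    [Fintype 𝒴] [Nonempty 𝒴]
    (μ : FinPMF Ω) (Q : Ω → 𝒬) (X₁₁ : Ω → 𝒜) (X₂₁ : Ω → ℬ) (X₃₁ : Ω → 𝒞)
    (h : ℬ → 𝒞 → 𝒮) (f : 𝒜 → 𝒮 → 𝒴)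
    (hindep : CondIndepFun3 μ X₁₁ X₂₁ X₃₁ Q)
    (hh : OneToOne h) (hf : OneToOne f) :
    min (condH μ X₁₁ Q)
      (min (condH μ (fun ω => f (X₁₁ ω) (h (X₂₁ ω) (X₃₁ ω))) (fun ω => (X₃₁ ω, Q ω)) - condH μ X₂₁ Q)
        (min (condH μ (fun ω => f (X₁₁ ω) (h (X₂₁ ω) (X₃₁ ω))) (fun ω => (X₂₁ ω, Q ω)) - condH μ X₃₁ Q)
          (condH μ (fun ω => f (X₁₁ ω) (h (X₂₁ ω) (X₃₁ ω))) Q - condH μ (fun ω => h (X₂₁ ω) (X₃₁ ω)) Q))) =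
      condH μ (fun ω => f (X₁₁ ω) (h (X₂₁ ω) (X₃₁ ω))) Q - condH μ (fun ω => h (X₂₁ ω) (X₃₁ ω)) Q := by
  have h1 := aux1 μ Q X₁₁ X₂₁ X₃₁ h f
  have h2 := aux2 μ Q X₁₁ X₂₁ X₃₁ h f hindep hh hf
  have h3 : condH μ (fun ω => f (X₁₁ ω) (h (X₂₁ ω) (X₃₁ ω))) Q
        - condH μ (fun ω => h (X₂₁ ω) (X₃₁ ω)) Q
      ≤ condH μ (fun ω => f (X₁₁ ω) (h (X₂₁ ω) (X₃₁ ω))) (fun ω => (X₂₁ ω, Q ω))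
        - condH μ X₃₁ Q :=
    aux2 μ Q X₁₁ X₃₁ X₂₁ (fun c b => h b c) f
      (condIndep3_swap μ Q X₁₁ X₂₁ X₃₁ hindep) ⟨hh.2, hh.1⟩ hf
  rw [min_eq_right h3, min_eq_right h2, min_eq_right h1]
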